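/- Let f ≥ 1 and L ≥ 1 be integers, and suppose 𝒟_f ≠ ∅. Then there exists a set B ⊆ V such that B intersects every path in 𝒟_f and, as real numbers, |B| ≤ (n/L)·ln(n²·(2L+2)^f) + 1. -/

import Mathlib

/-!
Every path `Q ∈ 𝒟_f` is a subpath of a shortest path of `G ∖ F`, hence the shortest walk with at
most `L` edges between its endpoints in `G ∖ F`; by uniqueness it is simple, so it has `L + 1`
distinct vertices. For fixed endpoints, the walks that are `≤ L`-edge optimal for some failure set
of size `≤ f` number at most `(2L+2)^f`: either the failure-free optimum `p₀` survives, or one of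
its at most `2L+1` vertices and edges has failed and we recurse with one failure fewer. Hence
`|𝒟_f| ≤ n²(2L+2)^f`. Since each remaining path has `L + 1` vertices, some vertex lies on at
least a `(L+1)/n` fraction of them; picking it greedily multiplies their number by at most
`1 - (L+1)/n ≤ exp(-(L+1)/n)`, so `(n/(L+1)) ln |𝒟_f| + 1` vertices suffice.
-/

open scoped ENNReal

namespace DSO

variable {V : Type*}

/-- `p` is a walk from `u` to `w` in the graph with edge relation `E`:
a nonempty list of vertices, consecutive vertices joined by edges. -/
def IsWalk (E : V → V → Prop) (p : List V) (u w : V) : Prop :=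
  p ≠ [] ∧ p.head? = some u ∧ p.getLast? = some w ∧ p.Chain' E

/-- The number of edges of a path given as a list of vertices. -/
def pathLen (p : List V) : ℕ := p.length - 1

/-- Total weight of a path, for real edge weights `w`. -/
def wt (w : V → V → ℝ) : List V → ℝ
  | [] => 0
  | [_] => 0
  | a :: b :: rest => w a b + wt w (b :: rest)

/-- Total weight of a path, for `ℝ≥0∞`-valued edge weights `w`. -/
noncomputable def ewt (w : V → V → ℝ≥0∞) : List V → ℝ≥0∞
  | [] => 0
  | [_] => 0
  | a :: b :: rest => w a b + ewt w (b :: rest)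

/-- A failure set `F ⊆ V ∪ E` is modelled as a set in `V ⊕ V × V`.
`IsFWalk E F p u w`: `p` is a `u`-to-`w` walk in `G ∖ F`, i.e. it uses no failed edge and
visits no failed vertex. -/
def IsFWalk (E : V → V → Prop) (F : Set (V ⊕ V × V)) (p : List V) (u w : V) : Prop :=
  IsWalk (fun a b => E a b ∧ Sum.inr (a, b) ∉ F) p u w ∧ ∀ x ∈ p, Sum.inl x ∉ F

/-- `d_G(u, x, F)`: the minimum weight of a `u`-to-`x` path in `G ∖ F` (`⊤` if none). -/
noncomputable def fdist (E : V → V → Prop) (w : V → V → ℝ) (F : Set (V ⊕ V × V))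
    (u x : V) : ℝ≥0∞ :=
  sInf ((fun p => ENNReal.ofReal (wt w p)) '' {p | IsFWalk E F p u x})

/-- `d^L_G(u, x, F)`: the minimum weight of a `u`-to-`x` path in `G ∖ F` containing at most
`L` edges (`⊤` if none). -/
noncomputable def fdistL (E : V → V → Prop) (w : V → V → ℝ) (F : Set (V ⊕ V × V))
    (L : ℕ) (u x : V) : ℝ≥0∞ :=
  sInf ((fun p => ENNReal.ofReal (wt w p)) '' {p | IsFWalk E F p u x ∧ pathLen p ≤ L})

/-- Weighted distance in an abstract `ℝ≥0∞`-weighted digraph `(E, w)`. -/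
noncomputable def ewdist (E : V → V → Prop) (w : V → V → ℝ≥0∞) (u x : V) : ℝ≥0∞ :=
  sInf ((fun p => ewt w p) '' {p | IsWalk E p u x})

/-- `𝒟_f`: the family of all contiguous subpaths with exactly `L` edges of the (unique)
shortest paths `P_G(s,t,F)`, over all `s, t ∈ V` and all `F ⊆ V ∪ E` with `|F| ≤ f`. -/
def Dfam (E : V → V → Prop) (w : V → V → ℝ) (f L : ℕ) : Set (List V) :=
  {Q | ∃ (s t : V) (F : Set (V ⊕ V × V)) (Pst : List V),
      F.Finite ∧ F.ncard ≤ f ∧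
      IsFWalk E F Pst s t ∧ ENNReal.ofReal (wt w Pst) = fdist E w F s t ∧
      Q <:+: Pst ∧ pathLen Q = L ∧ Q ≠ []}

end DSO

namespace DSO

variable {V : Type*}

section Walks

variable {R : V → V → Prop} {w : V → V → ℝ} {p Q : List V} {u v s t : V}

lemma wt_nonneg (hw : ∀ a b, 0 ≤ w a b) : ∀ p : List V, 0 ≤ wt w p
  | [] | [_] => le_rfl
  | a :: b :: rest => add_nonneg (hw a b) (wt_nonneg hw (b :: rest))

lemma wt_append_cons (w : V → V → ℝ) : ∀ (p : List V) (x : V) (q : List V),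
    wt w (p ++ x :: q) = wt w (p ++ [x]) + wt w (x :: q)
  | [], x, q => by simp [wt]
  | [a], x, q => by simp [wt]
  | a :: b :: p, x, q => by
    have := wt_append_cons w (b :: p) x q
    simp only [List.cons_append, wt] at this ⊢
    rw [this]; ring

lemma wt_append_append (w : V → V → ℝ) (A C : List V) (hu : Q.head? = some u)
    (hv : Q.getLast? = some v) :
    wt w (A ++ Q ++ C) = wt w (A ++ [u]) + wt w Q + wt w (v :: C) := by
  obtain ⟨Qt, rfl⟩ := List.head?_eq_some_iff.1 hu
  obtain ⟨Q', hQ'⟩ := List.getLast?_eq_some_iff.1 hv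
  have hQC : u :: (Qt ++ C) = Q' ++ v :: C := by simp [← List.cons_append, hQ']
  rw [List.append_assoc, List.cons_append, wt_append_cons w A u, hQC, wt_append_cons w Q' v,
    ← hQ']
  ring

lemma isChain_iff_forall_mem_zip_tail : ∀ l : List V,
    l.IsChain R ↔ ∀ ab ∈ l.zip l.tail, R ab.1 ab.2
  | [] | [_] => by simp
  | a :: b :: t => by
    simp [isChain_iff_forall_mem_zip_tail (b :: t)]

lemma exists_eq_append_cons_append_cons_of_not_nodup :
    ∀ {p : List V}, ¬ p.Nodup → ∃ (x : V) (a b c : List V), p = a ++ x :: (b ++ x :: c)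
  | [], h => absurd List.nodup_nil h
  | y :: l, h => by
    by_cases hy : y ∈ l
    · obtain ⟨b, c, rfl⟩ := List.append_of_mem hy
      exact ⟨y, [], b, c, rfl⟩
    · obtain ⟨x, a, b, c, rfl⟩ :=
        exists_eq_append_cons_append_cons_of_not_nodup fun hl => h (List.nodup_cons.2 ⟨hy, hl⟩)
      exact ⟨x, y :: a, b, c, rfl⟩

lemma IsWalk.splice {A C P : List V} (h : IsWalk R (A ++ Q ++ C) s t)
    (hu : Q.head? = some u) (hv : Q.getLast? = some v) (hP : IsWalk R P u v) :
    IsWalk R (A ++ P ++ C) s t := by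
  obtain ⟨-, hs, ht, hc⟩ := h
  obtain ⟨hP, hPu, hPv, hPc⟩ := hP
  refine ⟨by simp [hP], ?_, ?_, ?_⟩
  · simpa [List.head?_append, hu, hPu] using hs
  · simpa [List.getLast?_append, hv, hPv] using ht
  · have hc : (A ++ (Q ++ C)).IsChain R := by rw [← List.append_assoc]; exact hc
    show (A ++ P ++ C).IsChain R
    rw [List.append_assoc]
    rw [List.isChain_append, List.isChain_append] at hc ⊢
    simp only [List.head?_append, hu, hv, hPu, hPv] at hc ⊢
    exact ⟨hc.1, ⟨hPc, hc.2.1.2.1, hc.2.1.2.2⟩, hc.2.2⟩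

lemma IsWalk.exists_shorter_of_not_nodup (hw : ∀ a b, 0 ≤ w a b) (h : IsWalk R p u v)
    (hnd : ¬ p.Nodup) :
    ∃ p', p'.length < p.length ∧ p' ⊆ p ∧ IsWalk R p' u v ∧ wt w p' ≤ wt w p := by
  obtain ⟨x, a, b, c, rfl⟩ := exists_eq_append_cons_append_cons_of_not_nodup hnd
  obtain ⟨-, hu, hv, hc⟩ := h
  have hsplit : x :: (b ++ x :: c) = (x :: b) ++ x :: c := rfl
  have hc : (a ++ x :: (b ++ x :: c)).IsChain R := hc
  rw [List.isChain_split, hsplit] at hc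
  have hxc := (List.isChain_split.1 hc.2).2
  refine ⟨a ++ x :: c, by simp, fun y hy => by simp at hy ⊢; tauto,
    ⟨by simp, by simpa [List.head?_append] using hu, ?_, List.isChain_split.2 ⟨hc.1, hxc⟩⟩, ?_⟩
  · rwa [List.getLast?_append_cons, hsplit, List.getLast?_append_cons,
      ← List.getLast?_append_cons a] at hv
  rw [wt_append_cons w a x c, wt_append_cons w a x (b ++ x :: c), hsplit,
    wt_append_cons w (x :: b) x c]
  linarith [wt_nonneg hw (x :: b ++ [x])]

end Walks

section FaultTolerant

variable {E : V → V → Prop} {w : V → V → ℝ} {F F₀ : Set (V ⊕ V × V)} {p p₀ Q : List V}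
  {u v s t : V} {L : ℕ}

lemma IsFWalk.mono (hF : F₀ ⊆ F) (h : IsFWalk E F p u v) : IsFWalk E F₀ p u v :=
  ⟨⟨h.1.1, h.1.2.1, h.1.2.2.1, h.1.2.2.2.imp fun _ _ hab => ⟨hab.1, fun he => hab.2 (hF he)⟩⟩,
    fun x hx he => h.2 x hx (hF he)⟩

lemma IsFWalk.splice {A C P : List V} (h : IsFWalk E F (A ++ Q ++ C) s t)
    (hu : Q.head? = some u) (hv : Q.getLast? = some v) (hP : IsFWalk E F P u v) :
    IsFWalk E F (A ++ P ++ C) s t := by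
  refine ⟨h.1.splice hu hv hP.1, fun x hx => ?_⟩
  simp only [List.append_assoc, List.mem_append] at hx
  rcases hx with hx | hx | hx
  · exact h.2 x (by simp [hx])
  · exact hP.2 x hx
  · exact h.2 x (by simp [hx])

lemma IsFWalk.infix (h : IsFWalk E F p s t) (hQ : Q <:+: p) (hne : Q ≠ []) :
    ∃ u v, Q.head? = some u ∧ Q.getLast? = some v ∧ IsFWalk E F Q u v := by
  have hu := List.head?_eq_some_head hne
  have hv := List.getLast?_eq_some_getLast hne
  exact ⟨_, _, hu, hv, ⟨hne, hu, hv, h.1.2.2.2.infix hQ⟩, fun x hx => h.2 x (hQ.subset hx)⟩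

lemma fdist_le (h : IsFWalk E F p u v) : fdist E w F u v ≤ ENNReal.ofReal (wt w p) :=
  sInf_le ⟨p, h, rfl⟩

def boundedWalks (E : V → V → Prop) (F : Set (V ⊕ V × V)) (L : ℕ) (u v : V) : Set (List V) :=
  {p | IsFWalk E F p u v ∧ pathLen p ≤ L}

def shortestBoundedWalks (E : V → V → Prop) (w : V → V → ℝ) (F : Set (V ⊕ V × V)) (L : ℕ)
    (u v : V) : Set (List V) :=
  {p ∈ boundedWalks E F L u v | ENNReal.ofReal (wt w p) = fdistL E w F L u v}

lemma fdistL_le (h : p ∈ boundedWalks E F L u v) :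
    fdistL E w F L u v ≤ ENNReal.ofReal (wt w p) :=
  sInf_le ⟨p, h, rfl⟩

lemma boundedWalks_anti (hF : F₀ ⊆ F) : boundedWalks E F L u v ⊆ boundedWalks E F₀ L u v :=
  fun _ hp => ⟨hp.1.mono hF, hp.2⟩

lemma length_le_of_mem_boundedWalks (hp : p ∈ boundedWalks E F L u v) : p.length ≤ L + 1 := by
  have := hp.2
  unfold pathLen at this
  omega

lemma boundedWalks_finite [Finite V] : (boundedWalks E F L u v).Finite :=
  (List.finite_length_le V (L + 1)).subset fun _ => length_le_of_mem_boundedWalks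

lemma shortestBoundedWalks_nonempty [Finite V] (h : (boundedWalks E F L u v).Nonempty) :
    (shortestBoundedWalks E w F L u v).Nonempty := by
  obtain ⟨p, hp, hpmin⟩ :=
    (h.image fun p => ENNReal.ofReal (wt w p)).csInf_mem (boundedWalks_finite.image _)
  exact ⟨p, hp, hpmin⟩

lemma mem_shortestBoundedWalks_of_subset (hp₀ : p₀ ∈ shortestBoundedWalks E w F₀ L u v)
    (hF : F₀ ⊆ F) (h : IsFWalk E F p₀ u v) : p₀ ∈ shortestBoundedWalks E w F L u v := by
  have hp₀F : p₀ ∈ boundedWalks E F L u v := ⟨h, hp₀.1.2⟩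
  refine ⟨hp₀F, le_antisymm ?_ (fdistL_le hp₀F)⟩
  rw [hp₀.2]
  exact sInf_le_sInf (Set.image_mono (boundedWalks_anti hF))

lemma nodup_of_mem_shortestBoundedWalks (hw : ∀ a b, 0 ≤ w a b)
    (huniq : (shortestBoundedWalks E w F L u v).Subsingleton)
    (hp : p ∈ shortestBoundedWalks E w F L u v) : p.Nodup := by
  by_contra hnd
  have ⟨⟨⟨hwalk, hvert⟩, hlen⟩, hopt⟩ := hp
  obtain ⟨p', hlt, hsub, hwalk', hwt⟩ := hwalk.exists_shorter_of_not_nodup hw hnd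
  have hp' : p' ∈ boundedWalks E F L u v :=
    ⟨⟨hwalk', fun x hx => hvert x (hsub hx)⟩, by unfold pathLen at hlen ⊢; omega⟩
  have hp'opt : p' ∈ shortestBoundedWalks E w F L u v :=
    ⟨hp', le_antisymm (hopt ▸ ENNReal.ofReal_le_ofReal hwt) (fdistL_le hp')⟩
  exact hlt.ne (congrArg List.length (huniq hp'opt hp))

end FaultTolerant

section Dfam

variable {E : V → V → Prop} {w : V → V → ℝ} {F : Set (V ⊕ V × V)} {Q : List V}
  {u v s t : V} {f L : ℕ}

lemma wt_le_of_infix_of_optimal (hw : ∀ a b, 0 ≤ w a b) {A C P R : List V}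
    (hP : IsFWalk E F P s t) (hopt : ENNReal.ofReal (wt w P) = fdist E w F s t)
    (hQ : A ++ Q ++ C = P) (hu : Q.head? = some u) (hv : Q.getLast? = some v)
    (hR : IsFWalk E F R u v) : wt w Q ≤ wt w R := by
  subst hQ
  have h := fdist_le (w := w) (hP.splice hu hv hR)
  rw [← hopt, ENNReal.ofReal_le_ofReal_iff (wt_nonneg hw _), wt_append_append w A C hu hv,
    wt_append_append w A C hR.1.2.1 hR.1.2.2.1] at h
  linarith

lemma exists_mem_shortestBoundedWalks_of_mem_Dfam (hw : ∀ a b, 0 ≤ w a b)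
    (hQ : Q ∈ Dfam E w f L) :
    ∃ u v F, F.Finite ∧ F.ncard ≤ f ∧ Q ∈ shortestBoundedWalks E w F L u v := by
  obtain ⟨s, t, F, P, hF, hFf, hP, hopt, ⟨A, C, hAQC⟩, hlen, hne⟩ := hQ
  obtain ⟨u, v, hu, hv, hQw⟩ := hP.infix ⟨A, C, hAQC⟩ hne
  have hQb : Q ∈ boundedWalks E F L u v := ⟨hQw, hlen.le⟩
  refine ⟨u, v, F, hF, hFf, hQb, le_antisymm (le_sInf ?_) (fdistL_le hQb)⟩
  rintro _ ⟨R, ⟨hR, -⟩, rfl⟩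
  exact ENNReal.ofReal_le_ofReal (wt_le_of_infix_of_optimal hw hP hopt hAQC hu hv hR)

lemma length_of_mem_Dfam (hQ : Q ∈ Dfam E w f L) : Q.length = L + 1 := by
  obtain ⟨-, -, -, -, -, -, -, -, -, hlen, hne⟩ := hQ
  have := List.length_pos_iff.2 hne
  unfold pathLen at hlen
  omega

lemma toFinset_card_of_mem_Dfam [DecidableEq V] (hw : ∀ a b, 0 ≤ w a b)
    (huniq : ∀ (u v : V) (F : Set (V ⊕ V × V)), F.Finite → F.ncard ≤ f →
      (shortestBoundedWalks E w F L u v).Subsingleton)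
    (hQ : Q ∈ Dfam E w f L) : Q.toFinset.card = L + 1 := by
  obtain ⟨u, v, F, hF, hFf, hQ'⟩ := exists_mem_shortestBoundedWalks_of_mem_Dfam hw hQ
  rw [List.toFinset_card_of_nodup (nodup_of_mem_shortestBoundedWalks hw (huniq u v F hF hFf) hQ'),
    length_of_mem_Dfam hQ]

lemma Dfam_finite [Finite V] : (Dfam E w f L).Finite :=
  (List.finite_length_le V (L + 1)).subset fun _ hQ => (length_of_mem_Dfam hQ).le

end Dfam

section Counting

variable {E : V → V → Prop} {w : V → V → ℝ} {F F₀ : Set (V ⊕ V × V)} {p p₀ : List V}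
  {u v : V} {f k L : ℕ}

def pathElems [DecidableEq V] (p : List V) : Finset (V ⊕ V × V) :=
  (p.map Sum.inl).toFinset ∪ ((p.zip p.tail).map Sum.inr).toFinset

lemma card_pathElems_le [DecidableEq V] (p : List V) :
    (pathElems p).card ≤ p.length + (p.length - 1) :=
  (Finset.card_union_le _ _).trans <| add_le_add
    ((List.toFinset_card_le _).trans (by simp)) ((List.toFinset_card_le _).trans (by simp))

lemma IsFWalk.notMem_of_mem_pathElems [DecidableEq V] (h : IsFWalk E F p u v)
    {e : V ⊕ V × V} (he : e ∈ pathElems p) : e ∉ F := by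
  simp only [pathElems, Finset.mem_union, List.mem_toFinset, List.mem_map] at he
  rcases he with ⟨x, hx, rfl⟩ | ⟨ab, hab, rfl⟩
  · exact h.2 x hx
  · exact ((isChain_iff_forall_mem_zip_tail p).1 h.1.2.2.2 ab hab).2

lemma IsFWalk.of_forall_pathElems_notMem [DecidableEq V] (h : IsFWalk E F₀ p u v)
    (hF : ∀ e ∈ pathElems p, e ∉ F) : IsFWalk E F p u v := by
  refine ⟨⟨h.1.1, h.1.2.1, h.1.2.2.1, (isChain_iff_forall_mem_zip_tail p).2 fun ab hab => ?_⟩,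
    fun x hx => hF _ (Finset.mem_union_left _ (List.mem_toFinset.2 (List.mem_map_of_mem hx)))⟩
  exact ⟨((isChain_iff_forall_mem_zip_tail p).1 h.1.2.2.2 ab hab).1,
    hF _ (Finset.mem_union_right _ (List.mem_toFinset.2 (List.mem_map_of_mem hab)))⟩

def shortestBoundedWalksAbove (E : V → V → Prop) (w : V → V → ℝ) (F₀ : Set (V ⊕ V × V))
    (k L : ℕ) (u v : V) : Set (List V) :=
  {p | ∃ F, F.Finite ∧ F₀ ⊆ F ∧ F.ncard ≤ F₀.ncard + k ∧
    p ∈ shortestBoundedWalks E w F L u v}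

lemma shortestBoundedWalksAbove_subset :
    shortestBoundedWalksAbove E w F₀ k L u v ⊆ boundedWalks E F₀ L u v :=
  fun _ ⟨_, _, hF, _, hp⟩ => boundedWalks_anti hF hp.1

lemma shortestBoundedWalksAbove_zero_subset (hp₀ : p₀ ∈ shortestBoundedWalks E w F₀ L u v)
    (huniq : (shortestBoundedWalks E w F₀ L u v).Subsingleton) :
    shortestBoundedWalksAbove E w F₀ 0 L u v ⊆ {p₀} := by
  rintro p ⟨F, hF, hF₀F, hcard, hp⟩
  obtain rfl : F₀ = F := Set.eq_of_subset_of_ncard_le hF₀F hcard hF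
  exact huniq hp hp₀

lemma shortestBoundedWalksAbove_succ_subset [DecidableEq V]
    (hp₀ : p₀ ∈ shortestBoundedWalks E w F₀ L u v) (hF₀ : F₀.Finite)
    (huniq : ∀ F : Set (V ⊕ V × V), F.Finite → F.ncard ≤ F₀.ncard + (k + 1) →
      (shortestBoundedWalks E w F L u v).Subsingleton) :
    shortestBoundedWalksAbove E w F₀ (k + 1) L u v ⊆
      insert p₀ (⋃ e ∈ pathElems p₀, shortestBoundedWalksAbove E w (insert e F₀) k L u v) := by
  rintro p ⟨F, hF, hF₀F, hcard, hp⟩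
  by_cases hfail : ∃ e ∈ pathElems p₀, e ∈ F
  swap
  · exact Or.inl (huniq F hF hcard hp (mem_shortestBoundedWalks_of_subset hp₀ hF₀F
      (hp₀.1.1.of_forall_pathElems_notMem fun e he heF => hfail ⟨e, he, heF⟩)))
  obtain ⟨e, he, heF⟩ := hfail
  refine Or.inr (Set.mem_biUnion he ⟨F, hF, Set.insert_subset heF hF₀F, ?_, hp⟩)
  rw [Set.ncard_insert_of_notMem (hp₀.1.1.notMem_of_mem_pathElems he) hF₀]
  omega

lemma ncard_shortestBoundedWalksAbove_le [Finite V]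
    (huniq : ∀ F : Set (V ⊕ V × V), F.Finite → F.ncard ≤ f →
      (shortestBoundedWalks E w F L u v).Subsingleton) :
    ∀ (k : ℕ) (F₀ : Set (V ⊕ V × V)), F₀.Finite → F₀.ncard + k ≤ f →
      (shortestBoundedWalksAbove E w F₀ k L u v).ncard ≤ (2 * L + 2) ^ k := by
  classical
  intro k F₀ hF₀ hk
  rcases (shortestBoundedWalksAbove E w F₀ k L u v).eq_empty_or_nonempty with hempty | ⟨p, hp⟩
  · simp [hempty]
  obtain ⟨p₀, hp₀⟩ :=
    shortestBoundedWalks_nonempty (w := w) ⟨p, shortestBoundedWalksAbove_subset hp⟩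
  cases k with
  | zero =>
    simpa using Set.ncard_le_ncard
      (shortestBoundedWalksAbove_zero_subset hp₀ (huniq F₀ hF₀ (by omega)))
  | succ k =>
    have hlen := length_le_of_mem_boundedWalks hp₀.1
    have hfin : (insert p₀ (⋃ e ∈ pathElems p₀,
        shortestBoundedWalksAbove E w (insert e F₀) k L u v)).Finite :=
      boundedWalks_finite.subset <| Set.insert_subset hp₀.1 <| Set.iUnion₂_subset fun e _ =>
        shortestBoundedWalksAbove_subset.trans (boundedWalks_anti (Set.subset_insert e F₀))
    calc (shortestBoundedWalksAbove E w F₀ (k + 1) L u v).ncard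
        ≤ (insert p₀ (⋃ e ∈ pathElems p₀,
            shortestBoundedWalksAbove E w (insert e F₀) k L u v)).ncard :=
          Set.ncard_le_ncard (shortestBoundedWalksAbove_succ_subset hp₀ hF₀
            fun F hF hc => huniq F hF (hc.trans hk)) hfin
      _ ≤ ∑ e ∈ pathElems p₀,
            (shortestBoundedWalksAbove E w (insert e F₀) k L u v).ncard + 1 :=
          (Set.ncard_insert_le _ _).trans (by gcongr; exact Finset.set_ncard_biUnion_le _ _)
      _ ≤ ∑ e ∈ pathElems p₀, (2 * L + 2) ^ k + 1 := by
          gcongr with e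
          refine ncard_shortestBoundedWalksAbove_le huniq k _ (hF₀.insert e) ?_
          have := Set.ncard_insert_le e F₀
          omega
      _ ≤ (2 * L + 2) ^ (k + 1) := by
          have hcard : (pathElems p₀).card ≤ 2 * L + 1 := by
            have := card_pathElems_le p₀
            omega
          have := Nat.mul_le_mul_right ((2 * L + 2) ^ k) hcard
          have := Nat.one_le_pow k (2 * L + 2) (by omega)
          rw [Finset.sum_const, smul_eq_mul, pow_succ]
          linarith

end Counting

lemma ncard_Dfam_le [Fintype V] {E : V → V → Prop} {w : V → V → ℝ} {f L : ℕ}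
    (hw : ∀ a b, 0 ≤ w a b)
    (huniq : ∀ (u v : V) (F : Set (V ⊕ V × V)), F.Finite → F.ncard ≤ f →
      (shortestBoundedWalks E w F L u v).Subsingleton) :
    (Dfam E w f L).ncard ≤ Fintype.card V ^ 2 * (2 * L + 2) ^ f := by
  have hsub : Dfam E w f L ⊆ ⋃ uv ∈ (Finset.univ : Finset (V × V)),
      shortestBoundedWalksAbove E w ∅ f L uv.1 uv.2 := by
    intro Q hQ
    obtain ⟨u, v, F, hF, hFf, hQ⟩ := exists_mem_shortestBoundedWalks_of_mem_Dfam hw hQ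
    exact Set.mem_biUnion (Finset.mem_univ (u, v))
      ⟨F, hF, F.empty_subset, by simpa using hFf, hQ⟩
  calc (Dfam E w f L).ncard
      ≤ (⋃ uv ∈ (Finset.univ : Finset (V × V)),
          shortestBoundedWalksAbove E w ∅ f L uv.1 uv.2).ncard :=
        Set.ncard_le_ncard hsub (Finset.univ.finite_toSet.biUnion fun _ _ =>
          boundedWalks_finite.subset shortestBoundedWalksAbove_subset)
    _ ≤ ∑ uv : V × V, (shortestBoundedWalksAbove E w ∅ f L uv.1 uv.2).ncard :=
        Finset.set_ncard_biUnion_le _ _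
    _ ≤ ∑ _uv : V × V, (2 * L + 2) ^ f := by
        gcongr with uv
        exact ncard_shortestBoundedWalksAbove_le (huniq uv.1 uv.2) f ∅ Set.finite_empty
          (by simp)
    _ = Fintype.card V ^ 2 * (2 * L + 2) ^ f := by
        simp [Fintype.card_prod, sq]

section HittingSet

variable {ι : Type*}

lemma add_log_le_log_of_le_mul_one_sub {x m M : ℝ} (hm : 0 < m) (hM : 0 ≤ M)
    (h : m ≤ M * (1 - x)) : x + Real.log m ≤ Real.log M := by
  have hMpos : 0 < M := lt_of_le_of_ne hM fun h0 => by rw [← h0, zero_mul] at h; linarith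
  have hm' : m ≤ M * Real.exp (-x) :=
    h.trans (by gcongr; linarith [Real.add_one_le_exp (-x)])
  calc x + Real.log m ≤ x + Real.log (M * Real.exp (-x)) := by gcongr
    _ = Real.log M := by rw [Real.log_mul hMpos.ne' (Real.exp_pos _).ne', Real.log_exp]; ring

lemma div_mul_log_add_one_le {n k d m : ℕ} (hn : 0 < n) (hk : 0 < k) (hm : 0 < m)
    (hd : k * (d + m) ≤ n * d) :
    (n / k : ℝ) * Real.log m + 1 ≤ n / k * Real.log (d + m : ℕ) := by
  have hnR : (0 : ℝ) < n := by exact_mod_cast hn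
  have hkR : (0 : ℝ) < k := by exact_mod_cast hk
  have hdR : (k : ℝ) * (d + m) ≤ n * d := by exact_mod_cast hd
  have hshrink : (k / n : ℝ) + Real.log m ≤ Real.log (d + m : ℕ) := by
    refine add_log_le_log_of_le_mul_one_sub (by exact_mod_cast hm) (by positivity) ?_
    have : ((d + m : ℕ) : ℝ) * (k / n) ≤ d := by
      rw [mul_div_assoc', div_le_iff₀ hnR]
      push_cast
      linarith
    push_cast at this ⊢
    linarith
  have := mul_le_mul_of_nonneg_left hshrink (by positivity : (0 : ℝ) ≤ n / k)
  rw [mul_add, div_mul_div_cancel₀ hkR.ne', div_self hnR.ne'] at this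
  linarith

lemma exists_le_card_filter_mem [Fintype V] [DecidableEq V] [Nonempty V] (𝒬 : Finset ι)
    (S : ι → Finset V) {k : ℕ} (hS : ∀ i ∈ 𝒬, k ≤ (S i).card) :
    ∃ v, k * 𝒬.card ≤ Fintype.card V * (𝒬.filter (v ∈ S ·)).card := by
  have hcount : ∑ v : V, (𝒬.filter (v ∈ S ·)).card = ∑ i ∈ 𝒬, (S i).card := by
    simpa [Finset.bipartiteAbove, Finset.bipartiteBelow] using
      Finset.sum_card_bipartiteAbove_eq_sum_card_bipartiteBelow (s := Finset.univ) (t := 𝒬)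
        (fun v i => v ∈ S i)
  have hle : ∑ _v : V, k * 𝒬.card ≤ ∑ v : V, Fintype.card V * (𝒬.filter (v ∈ S ·)).card := by
    rw [Finset.sum_const, Finset.card_univ, smul_eq_mul, ← Finset.mul_sum, hcount]
    exact Nat.mul_le_mul_left _ (by simpa [mul_comm] using Finset.card_nsmul_le_sum 𝒬 _ k hS)
  obtain ⟨v, -, hv⟩ := Finset.exists_le_of_sum_le Finset.univ_nonempty hle
  exact ⟨v, hv⟩

theorem exists_hitting_set [Fintype V] (S : ι → Finset V) {k : ℕ} (hk : 0 < k)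
    (𝒬 : Finset ι) (hS : ∀ i ∈ 𝒬, k ≤ (S i).card) (h𝒬 : 𝒬.Nonempty) :
    ∃ B : Finset V, (∀ i ∈ 𝒬, ∃ x ∈ S i, x ∈ B) ∧
      (B.card : ℝ) ≤ Fintype.card V / k * Real.log 𝒬.card + 1 := by
  classical
  induction 𝒬 using Finset.strongInduction with
  | H 𝒬 ih =>
  obtain ⟨i₀, hi₀⟩ := h𝒬
  obtain ⟨x₀, -⟩ := Finset.card_pos.1 (hk.trans_le (hS i₀ hi₀))
  have : Nonempty V := ⟨x₀⟩
  obtain ⟨v, hv⟩ := exists_le_card_filter_mem 𝒬 S hS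
  set 𝒬' := 𝒬.filter (v ∉ S ·)
  have hcard : (𝒬.filter (v ∈ S ·)).card + 𝒬'.card = 𝒬.card :=
    Finset.card_filter_add_card_filter_not _
  rcases 𝒬'.eq_empty_or_nonempty with h' | h'
  · refine ⟨{v}, fun i hi => ⟨v, ?_, Finset.mem_singleton_self v⟩, ?_⟩
    · by_contra hvi
      exact Finset.eq_empty_iff_forall_notMem.1 h' i (Finset.mem_filter.2 ⟨hi, hvi⟩)
    · simp only [Finset.card_singleton, Nat.cast_one, le_add_iff_nonneg_left]
      exact mul_nonneg (by positivity) (Real.log_natCast_nonneg _)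
  have hss : 𝒬' ⊂ 𝒬 := by
    have hpos : 0 < k * 𝒬.card := Nat.mul_pos hk (Finset.card_pos.2 ⟨i₀, hi₀⟩)
    obtain ⟨i, hi⟩ := Finset.card_pos.1 (Nat.pos_of_mul_pos_left (hpos.trans_le hv))
    rw [Finset.mem_filter] at hi
    exact Finset.filter_ssubset.2 ⟨i, hi.1, not_not.2 hi.2⟩
  obtain ⟨B, hB, hBcard⟩ := ih 𝒬' hss (fun i hi => hS i (Finset.mem_filter.1 hi).1) h'
  refine ⟨insert v B, fun i hi => ?_, ?_⟩
  · by_cases hvi : v ∈ S i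
    · exact ⟨v, hvi, Finset.mem_insert_self v B⟩
    · obtain ⟨x, hx, hxB⟩ := hB i (Finset.mem_filter.2 ⟨hi, hvi⟩)
      exact ⟨x, hx, Finset.mem_insert_of_mem hxB⟩
  have hstep := div_mul_log_add_one_le Fintype.card_pos hk h'.card_pos (hcard ▸ hv)
  rw [hcard] at hstep
  calc ((insert v B).card : ℝ) ≤ B.card + 1 := by exact_mod_cast Finset.card_insert_le v B
    _ ≤ Fintype.card V / k * Real.log 𝒬.card + 1 := by linarith

end HittingSet

end DSO

theorem stmt16_general {V : Type*} [Fintype V]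
    (E : V → V → Prop) (w : V → V → ℝ) (hw : ∀ a b, 0 ≤ w a b)
    (n : ℕ) (hn : Fintype.card V = n)
    (f L : ℕ) (hL : 1 ≤ L)
    (huniqL : ∀ (u x : V) (F : Set (V ⊕ V × V)), F.Finite → F.ncard ≤ f → ∀ L' : ℕ,
      ∀ p q : List V,
        DSO.IsFWalk E F p u x → DSO.pathLen p ≤ L' →
          ENNReal.ofReal (DSO.wt w p) = DSO.fdistL E w F L' u x →
        DSO.IsFWalk E F q u x → DSO.pathLen q ≤ L' →
          ENNReal.ofReal (DSO.wt w q) = DSO.fdistL E w F L' u x →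
        p = q)
    (hne : (DSO.Dfam E w f L).Nonempty) :
    ∃ B : Finset V, (∀ Q ∈ DSO.Dfam E w f L, ∃ x ∈ Q, x ∈ B) ∧
      (B.card : ℝ) ≤ ((n : ℝ) / (L : ℝ)) *
        Real.log ((n : ℝ) ^ 2 * (2 * (L : ℝ) + 2) ^ f) + 1 := by
  classical
  subst hn
  have huniq : ∀ u v F, F.Finite → F.ncard ≤ f →
      (DSO.shortestBoundedWalks E w F L u v).Subsingleton :=
    fun u v F hF hc p hp q hq => huniqL u v F hF hc L p q hp.1.1 hp.1.2 hp.2 hq.1.1 hq.1.2 hq.2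
  have hfin : (DSO.Dfam E w f L).Finite := DSO.Dfam_finite
  obtain ⟨B, hB, hBcard⟩ := DSO.exists_hitting_set List.toFinset L.succ_pos hfin.toFinset
    (fun Q hQ => (DSO.toFinset_card_of_mem_Dfam hw huniq (hfin.mem_toFinset.1 hQ)).ge)
    (hfin.toFinset_nonempty.2 hne)
  refine ⟨B, fun Q hQ => ?_, hBcard.trans ?_⟩
  · obtain ⟨x, hx, hxB⟩ := hB Q (hfin.mem_toFinset.2 hQ)
    exact ⟨x, List.mem_toFinset.1 hx, hxB⟩
  have hcount : (hfin.toFinset.card : ℝ) ≤ (Fintype.card V : ℝ) ^ 2 * (2 * L + 2) ^ f := by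
    rw [← Set.ncard_eq_toFinset_card _ hfin]
    exact_mod_cast DSO.ncard_Dfam_le hw huniq
  have hpos : (1 : ℝ) ≤ hfin.toFinset.card := by
    exact_mod_cast (hfin.toFinset_nonempty.2 hne).card_pos
  gcongr
  exact L.le_succ

/-- Under the unique-shortest-paths assumption, if `𝒟_f ≠ ∅` then there is
a set `B ⊆ V` intersecting every path of `𝒟_f` with `|B| ≤ (n/L)·ln(n²·(2L+2)^f) + 1`. -/
theorem stmt16 {V : Type*} [Fintype V] [DecidableEq V]
    (E : V → V → Prop) (w : V → V → ℝ) (hw : ∀ a b, 0 ≤ w a b)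
    (n : ℕ) (hn : Fintype.card V = n)
    (f L : ℕ) (hf : 1 ≤ f) (hL : 1 ≤ L)
    (huniq : ∀ (u x : V) (F : Set (V ⊕ V × V)), F.Finite → F.ncard ≤ f →
      ∀ p q : List V,
        DSO.IsFWalk E F p u x → ENNReal.ofReal (DSO.wt w p) = DSO.fdist E w F u x →
        DSO.IsFWalk E F q u x → ENNReal.ofReal (DSO.wt w q) = DSO.fdist E w F u x →
        p = q)
    (huniqL : ∀ (u x : V) (F : Set (V ⊕ V × V)), F.Finite → F.ncard ≤ f → ∀ L' : ℕ,
      ∀ p q : List V,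
        DSO.IsFWalk E F p u x → DSO.pathLen p ≤ L' →
          ENNReal.ofReal (DSO.wt w p) = DSO.fdistL E w F L' u x →
        DSO.IsFWalk E F q u x → DSO.pathLen q ≤ L' →
          ENNReal.ofReal (DSO.wt w q) = DSO.fdistL E w F L' u x →
        p = q)
    (hne : (DSO.Dfam E w f L).Nonempty) :
    ∃ B : Finset V, (∀ Q ∈ DSO.Dfam E w f L, ∃ x ∈ Q, x ∈ B) ∧
      (B.card : ℝ) ≤ ((n : ℝ) / (L : ℝ)) *
        Real.log ((n : ℝ) ^ 2 * (2 * (L : ℝ) + 2) ^ f) + 1 :=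
  stmt16_general E w hw n hn f L hL huniqL hne
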